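/- arXiv:2504.14158 — 2 statements merged into one kernel-verified Lean document; each statement's English description precedes it below -/
import Mathlib

section
/- Let Θ, Ψ be convex and closed sets of effects on a finite-dimensional Hilbert space with Ψ nonempty. Then Θ ≼_ang Ψ (for all density operators ρ, sup_{M∈Θ} tr(Mρ) ≤ sup_{N∈Ψ} tr(Nρ)) if and only if Θ ≤_H Ψ (for every M ∈ Θ there exists N ∈ Ψ with M ⊑ N). -/
open Matrix
open scoped ComplexOrder

noncomputable section

/-- Löwner order: `A ⊑ B` iff `B - A` is positive semidefinite. -/
def Loewner {d : Type*} [Fintype d] (A B : Matrix d d ℂ) : Prop :=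
  (B - A).PosSemidef

/-- An effect: a positive semidefinite operator bounded above by the identity. -/
def IsEffect {d : Type*} [Fintype d] [DecidableEq d] (M : Matrix d d ℂ) : Prop :=
  M.PosSemidef ∧ (1 - M).PosSemidef

/-- A (partial) density operator: positive semidefinite with trace at most 1. -/
def IsDensity {d : Type*} [Fintype d] (ρ : Matrix d d ℂ) : Prop :=
  ρ.PosSemidef ∧ ρ.trace.re ≤ 1

/-- An orthogonal projector: Hermitian idempotent. -/
def IsProj {d : Type*} [Fintype d] (P : Matrix d d ℂ) : Prop :=
  P.IsHermitian ∧ P * P = P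

-- Demonic expectation: `inf_{M ∈ Θ} tr(M ρ)`, with the convention that the
-- infimum over the empty set is `tr ρ`.
open Classical in
def demExp {d : Type*} [Fintype d] (Θ : Set (Matrix d d ℂ)) (ρ : Matrix d d ℂ) : ℝ :=
  if Θ = ∅ then ρ.trace.re else sInf ((fun M => (M * ρ).trace.re) '' Θ)

/-- Angelic expectation: `sup_{M ∈ Θ} tr(M ρ)`; note `sSup ∅ = 0` in `ℝ`,
matching the convention that the supremum over the empty set is `0`. -/
def angExp {d : Type*} [Fintype d] (Θ : Set (Matrix d d ℂ)) (ρ : Matrix d d ℂ) : ℝ :=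
  sSup ((fun M => (M * ρ).trace.re) '' Θ)

/-- The extension `I_{Fin m} ⊗ Φ` of a super-operator `Φ`, acting blockwise. -/
def tensorMap {n : ℕ} (Φ : Matrix (Fin n) (Fin n) ℂ → Matrix (Fin n) (Fin n) ℂ) (m : ℕ)
    (A : Matrix (Fin m × Fin n) (Fin m × Fin n) ℂ) :
    Matrix (Fin m × Fin n) (Fin m × Fin n) ℂ :=
  fun p q => Φ (Matrix.of fun a b => A (p.1, a) (q.1, b)) p.2 q.2

/-- Complete positivity: every extension `I_K ⊗ Φ` maps positive semidefinite
matrices to positive semidefinite matrices. -/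
def IsCP {n : ℕ} (Φ : Matrix (Fin n) (Fin n) ℂ → Matrix (Fin n) (Fin n) ℂ) : Prop :=
  ∀ (m : ℕ) (A : Matrix (Fin m × Fin n) (Fin m × Fin n) ℂ),
    A.PosSemidef → (tensorMap Φ m A).PosSemidef

/-- Trace-nonincreasing on positive operators. -/
def IsTNI {n : ℕ} (Φ : Matrix (Fin n) (Fin n) ℂ → Matrix (Fin n) (Fin n) ℂ) : Prop :=
  ∀ A : Matrix (Fin n) (Fin n) ℂ, A.PosSemidef → (Φ A).trace.re ≤ A.trace.re

/-- Trace-preserving on positive operators. -/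
def IsTP {n : ℕ} (Φ : Matrix (Fin n) (Fin n) ℂ → Matrix (Fin n) (Fin n) ℂ) : Prop :=
  ∀ A : Matrix (Fin n) (Fin n) ℂ, A.PosSemidef → (Φ A).trace = A.trace

/-- CPTN super-operator: linear, completely positive, and trace-nonincreasing. -/
def IsCPTN {n : ℕ} (Φ : Matrix (Fin n) (Fin n) ℂ → Matrix (Fin n) (Fin n) ℂ) : Prop :=
  IsLinearMap ℂ Φ ∧ IsCP Φ ∧ IsTNI Φ

/-- The Choi matrix `J(Φ) = (Φ ⊗ I)(Ω)` of `Φ`, where `Ω` is the maximally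
entangled state on `H ⊗ H`. -/
def choi {n : ℕ} (Φ : Matrix (Fin n) (Fin n) ℂ → Matrix (Fin n) (Fin n) ℂ) :
    Matrix (Fin n × Fin n) (Fin n × Fin n) ℂ :=
  fun p q => (1 / (n : ℂ)) * Φ (Matrix.single p.2 q.2 1) p.1 q.1


/-!
If every `M ∈ Θ` lies below some `N ∈ Ψ` in the Löwner order, then `tr(Mρ) ≤ tr(Nρ)` for every
state `ρ`, and the suprema compare. Conversely, if some `M ∈ Θ` lies below no `N ∈ Ψ`, the
compact convex set `Ψ - M` misses the closed convex cone of positive semidefinite matrices, so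
Hahn–Banach separates them by a real functional. Represented through the trace pairing and
symmetrized, this functional is a positive semidefinite `σ` with `sup_{N ∈ Ψ} tr(Nσ) < tr(Mσ)`;
rescaled to a density operator, `σ` witnesses the failure of `Θ ≼_ang Ψ`.
-/

namespace Matrix

variable {d : Type*} [Fintype d]

instance : LocallyConvexSpace ℝ (Matrix d d ℂ) :=
  inferInstanceAs (LocallyConvexSpace ℝ (d → d → ℂ))

theorem PosSemidef.re_trace_mul_nonneg {A B : Matrix d d ℂ} (hA : A.PosSemidef)
    (hB : B.PosSemidef) : 0 ≤ (A * B).trace.re := by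
  classical
  obtain ⟨C, rfl⟩ : ∃ C : Matrix d d ℂ, A = Cᴴ * C := by
    open scoped MatrixOrder in exact CStarAlgebra.nonneg_iff_eq_star_mul_self.mp hA.nonneg
  rw [mul_assoc, trace_mul_comm]
  exact (Complex.nonneg_iff.mp (hB.mul_mul_conjTranspose_same C).trace_nonneg).1

omit [Fintype d] in
theorem convex_setOf_posSemidef : Convex ℝ {A : Matrix d d ℂ | A.PosSemidef} :=
  fun _ hA _ hB _ _ ha hb _ => (hA.smul ha).add (hB.smul hb)

theorem isClosed_setOf_posSemidef [DecidableEq d] :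
    IsClosed {A : Matrix d d ℂ | A.PosSemidef} := by
  open scoped MatrixOrder Matrix.Norms.L2Operator in
  simpa [Set.Ici, nonneg_iff_posSemidef] using isClosed_Ici (a := (0 : Matrix d d ℂ))

-- In the C⋆-norm, `0 ≤ M ≤ 1` forces `‖M‖ ≤ ‖1‖`.
theorem isCompact_of_forall_isEffect [DecidableEq d] {S : Set (Matrix d d ℂ)} (hS : IsClosed S)
    (h : ∀ M ∈ S, IsEffect M) : IsCompact S := by
  open scoped MatrixOrder Matrix.Norms.L2Operator in
  refine Metric.isCompact_of_isClosed_isBounded hS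
    ((Metric.isBounded_closedBall (x := 0) (r := ‖(1 : Matrix d d ℂ)‖)).subset fun M hM => ?_)
  rw [Metric.mem_closedBall, dist_zero_right]
  exact CStarAlgebra.norm_le_norm_of_nonneg_of_le (h M hM).1.nonneg (le_iff.mpr (h M hM).2)

theorem IsHermitian.re_trace_mul_conjTranspose {A : Matrix d d ℂ} (hA : A.IsHermitian)
    (C : Matrix d d ℂ) : (A * Cᴴ).trace.re = (A * C).trace.re := by
  rw [← hA.eq, ← conjTranspose_mul, trace_conjTranspose, hA.eq, trace_mul_comm]
  simp

theorem trace_vecMulVec_star_mul (x : d → ℂ) (σ : Matrix d d ℂ) :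
    (vecMulVec x (star x) * σ).trace = star x ⬝ᵥ σ *ᵥ x := by
  rw [trace_mul_comm, mul_vecMulVec, trace_vecMulVec, dotProduct_comm]

theorem posSemidef_of_re_trace_mul_nonneg {σ : Matrix d d ℂ} (hσ : σ.IsHermitian)
    (h : ∀ P : Matrix d d ℂ, P.PosSemidef → 0 ≤ (P * σ).trace.re) : σ.PosSemidef := by
  refine posSemidef_iff_dotProduct_mulVec.mpr ⟨hσ, fun x => Complex.nonneg_iff.mpr ⟨?_, ?_⟩⟩
  · simpa [trace_vecMulVec_star_mul] using h _ (posSemidef_vecMulVec_self_star x)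
  · exact (hσ.im_star_dotProduct_mulVec_self x).symm

def reTraceForm : LinearMap.BilinForm ℝ (Matrix d d ℂ) :=
  LinearMap.mk₂ ℝ (fun A C => (A * C).trace.re)
    (fun A B C => by simp [add_mul]) (fun c A C => by simp)
    (fun A B C => by simp [mul_add]) (fun c A C => by simp)

theorem reTraceForm_apply (A C : Matrix d d ℂ) : reTraceForm A C = (A * C).trace.re := rfl

theorem reTraceForm_nondegenerate :
    (reTraceForm : LinearMap.BilinForm ℝ (Matrix d d ℂ)).Nondegenerate := by
  have separatingLeft : ∀ A : Matrix d d ℂ, (∀ C, (A * C).trace.re = 0) → A = 0 := fun A h =>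
    trace_mul_conjTranspose_self_eq_zero_iff.mp <| Complex.ext (h Aᴴ)
      (Complex.nonneg_iff.mp (posSemidef_self_mul_conjTranspose A).trace_nonneg).2.symm
  exact ⟨separatingLeft, fun C h => separatingLeft C fun A => by rw [trace_mul_comm]; exact h A⟩

theorem exists_re_trace_mul_eq (f : Module.Dual ℝ (Matrix d d ℂ)) :
    ∃ C : Matrix d d ℂ, ∀ A, f A = (A * C).trace.re :=
  ⟨(reTraceForm.toDual reTraceForm_nondegenerate).symm f, fun A => by
    rw [← LinearMap.BilinForm.apply_toDual_symm_apply (hB := reTraceForm_nondegenerate) f A,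
      reTraceForm_apply, trace_mul_comm]⟩

omit [Fintype d] in
theorem PosSemidef.nonneg_of_forall_lt_apply (f : Matrix d d ℂ →ₗ[ℝ] ℝ) {v : ℝ}
    (hf : ∀ P : Matrix d d ℂ, P.PosSemidef → v < f P) {P : Matrix d d ℂ} (hP : P.PosSemidef) :
    0 ≤ f P := by
  have hv : v < 0 := by simpa using hf 0 .zero
  by_contra! hfP
  have hscaled := hf ((v / f P) • P) (hP.smul (div_nonneg_of_nonpos hv.le hfP.le))
  rw [f.map_smul, smul_eq_mul, div_mul_cancel₀ _ hfP.ne] at hscaled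
  exact hscaled.false

theorem PosSemidef.exists_pos_isDensity_smul {σ : Matrix d d ℂ} (hσ : σ.PosSemidef) :
    ∃ t : ℝ, 0 < t ∧ IsDensity (t • σ) := by
  have hτ : 0 ≤ σ.trace.re := (Complex.nonneg_iff.mp hσ.trace_nonneg).1
  refine ⟨(σ.trace.re + 1)⁻¹, by positivity, hσ.smul (by positivity), ?_⟩
  rw [trace_smul, Complex.smul_re, smul_eq_mul, inv_mul_le_iff₀ (by positivity)]
  linarith

end Matrix

open Matrix

variable {d : Type*} [Fintype d]

theorem Loewner.re_trace_mul_le {M N ρ : Matrix d d ℂ} (hMN : Loewner M N)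
    (hρ : ρ.PosSemidef) : (M * ρ).trace.re ≤ (N * ρ).trace.re := by
  have := hMN.re_trace_mul_nonneg hρ
  rwa [sub_mul, trace_sub, Complex.sub_re, sub_nonneg] at this

theorem le_angExp [DecidableEq d] {Θ : Set (Matrix d d ℂ)} (hΘ : ∀ M ∈ Θ, IsEffect M)
    {ρ M : Matrix d d ℂ} (hρ : ρ.PosSemidef) (hM : M ∈ Θ) :
    (M * ρ).trace.re ≤ angExp Θ ρ := by
  refine le_csSup ⟨ρ.trace.re, Set.forall_mem_image.2 fun N hN => ?_⟩ ⟨M, hM, rfl⟩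
  simpa using Loewner.re_trace_mul_le (hΘ N hN).2 hρ

theorem angExp_le {Ψ : Set (Matrix d d ℂ)} (hΨ : Ψ.Nonempty) {ρ : Matrix d d ℂ} {c : ℝ}
    (h : ∀ N ∈ Ψ, (N * ρ).trace.re ≤ c) : angExp Ψ ρ ≤ c :=
  csSup_le (hΨ.image _) (Set.forall_mem_image.2 h)

theorem angExp_le_angExp_of_forall_exists_loewner [DecidableEq d]
    {Θ Ψ : Set (Matrix d d ℂ)} (hΨe : ∀ N ∈ Ψ, IsEffect N) (hΨ : Ψ.Nonempty)
    {ρ : Matrix d d ℂ} (hρ : ρ.PosSemidef) (hΘΨ : ∀ M ∈ Θ, ∃ N ∈ Ψ, Loewner M N) :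
    angExp Θ ρ ≤ angExp Ψ ρ := by
  obtain ⟨N₀, hN₀⟩ := hΨ
  -- `sSup ∅ = 0`, so the case `Θ = ∅` needs `0 ≤ angExp Ψ ρ`.
  refine Real.sSup_le (Set.forall_mem_image.2 fun M hM => ?_)
    (((hΨe N₀ hN₀).1.re_trace_mul_nonneg hρ).trans (le_angExp hΨe hρ hN₀))
  obtain ⟨N, hN, hMN⟩ := hΘΨ M hM
  exact (hMN.re_trace_mul_le hρ).trans (le_angExp hΨe hρ hN)

theorem exists_posSemidef_re_trace_mul_lt [DecidableEq d] {M : Matrix d d ℂ}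
    {Ψ : Set (Matrix d d ℂ)} (hM : M.IsHermitian) (hΨ : ∀ N ∈ Ψ, N.IsHermitian)
    (hΨcv : Convex ℝ Ψ) (hΨcpt : IsCompact Ψ) (hMΨ : ∀ N ∈ Ψ, ¬ Loewner M N) :
    ∃ σ : Matrix d d ℂ, σ.PosSemidef ∧
      ∃ c < (M * σ).trace.re, ∀ N ∈ Ψ, (N * σ).trace.re ≤ c := by
  have hdisj : Disjoint ((-M + ·) '' Ψ) {P : Matrix d d ℂ | P.PosSemidef} := by
    rw [Set.disjoint_left]
    rintro _ ⟨N, hN, rfl⟩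
    simpa [neg_add_eq_sub, Loewner] using hMΨ N hN
  obtain ⟨f, u, v, hfΨ, huv, hfP⟩ := geometric_hahn_banach_compact_closed
    (hΨcv.translate (-M)) (hΨcpt.image (continuous_const_add (-M)))
    convex_setOf_posSemidef isClosed_setOf_posSemidef hdisj
  have hf_nonneg (P : Matrix d d ℂ) (hP : P.PosSemidef) : 0 ≤ f P :=
    PosSemidef.nonneg_of_forall_lt_apply f.toLinearMap hfP hP
  have hu : u < 0 := huv.trans (by simpa using hfP 0 .zero)
  obtain ⟨C, hC⟩ := exists_re_trace_mul_eq f.toLinearMap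
  simp only [ContinuousLinearMap.coe_coe] at hC
  set σ := C + Cᴴ
  have hσ (A : Matrix d d ℂ) (hA : A.IsHermitian) : (A * σ).trace.re = 2 * f A := by
    rw [mul_add, trace_add, Complex.add_re, hA.re_trace_mul_conjTranspose, hC]
    ring
  have hσpsd : σ.PosSemidef := by
    refine posSemidef_of_re_trace_mul_nonneg ?_ fun P hP => ?_
    · simp [σ, IsHermitian, add_comm]
    · rw [hσ P hP.1]
      linarith [hf_nonneg P hP]
  refine ⟨σ, hσpsd, (M * σ).trace.re + 2 * u, by linarith, fun N hN => ?_⟩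
  have hgap := hσ (-M + N) (hM.neg.add (hΨ N hN))
  rw [add_mul, trace_add, Complex.add_re, neg_mul, trace_neg, Complex.neg_re] at hgap
  linarith [hfΨ (-M + N) ⟨N, hN, rfl⟩]

theorem forall_exists_loewner_of_angExp_le [DecidableEq d] {Θ Ψ : Set (Matrix d d ℂ)}
    (hΘe : ∀ M ∈ Θ, IsEffect M) (hΨe : ∀ N ∈ Ψ, IsEffect N) (hΨcv : Convex ℝ Ψ)
    (hΨcl : IsClosed Ψ) (hΨ : Ψ.Nonempty)
    (hang : ∀ ρ : Matrix d d ℂ, IsDensity ρ → angExp Θ ρ ≤ angExp Ψ ρ) :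
    ∀ M ∈ Θ, ∃ N ∈ Ψ, Loewner M N := by
  intro M hM
  by_contra! hMΨ
  obtain ⟨σ, hσ, c, hcM, hcΨ⟩ := exists_posSemidef_re_trace_mul_lt (hΘe M hM).1.1
    (fun N hN => (hΨe N hN).1.1) hΨcv (isCompact_of_forall_isEffect hΨcl hΨe) hMΨ
  obtain ⟨t, ht, hρ⟩ := hσ.exists_pos_isDensity_smul
  have hscale (A : Matrix d d ℂ) : (A * (t • σ)).trace.re = t * (A * σ).trace.re := by
    rw [mul_smul_comm, trace_smul, Complex.smul_re, smul_eq_mul]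
  have hle : t * (M * σ).trace.re ≤ t * c := calc
    t * (M * σ).trace.re = (M * (t • σ)).trace.re := (hscale M).symm
    _ ≤ angExp Θ (t • σ) := le_angExp hΘe hρ.1 hM
    _ ≤ angExp Ψ (t • σ) := hang _ hρ
    _ ≤ t * c := angExp_le hΨ fun N hN => by
      rw [hscale]
      exact mul_le_mul_of_nonneg_left (hcΨ N hN) ht.le
  exact (mul_lt_mul_of_pos_left hcM ht).not_ge hle

theorem ang_iff_hoare_general {n : ℕ} (Θ Ψ : Set (Matrix (Fin n) (Fin n) ℂ))
    (hΘe : ∀ M ∈ Θ, IsEffect M) (hΨe : ∀ N ∈ Ψ, IsEffect N)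
    (hΨcv : Convex ℝ Ψ)
    (hΨcl : IsClosed Ψ)
    (hne : Ψ.Nonempty) :
    (∀ ρ : Matrix (Fin n) (Fin n) ℂ, IsDensity ρ → angExp Θ ρ ≤ angExp Ψ ρ) ↔
      (∀ M ∈ Θ, ∃ N ∈ Ψ, Loewner M N) :=
  ⟨forall_exists_loewner_of_angExp_le hΘe hΨe hΨcv hΨcl hne,
    fun hΘΨ _ hρ => angExp_le_angExp_of_forall_exists_loewner hΨe hne hρ.1 hΘΨ⟩

theorem ang_iff_hoare {n : ℕ} (Θ Ψ : Set (Matrix (Fin n) (Fin n) ℂ))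
    (hΘe : ∀ M ∈ Θ, IsEffect M) (hΨe : ∀ N ∈ Ψ, IsEffect N)
    (hΘcv : Convex ℝ Θ) (hΨcv : Convex ℝ Ψ)
    (hΘcl : IsClosed Θ) (hΨcl : IsClosed Ψ)
    (hne : Ψ.Nonempty) :
    (∀ ρ : Matrix (Fin n) (Fin n) ℂ, IsDensity ρ → angExp Θ ρ ≤ angExp Ψ ρ) ↔
      (∀ M ∈ Θ, ∃ N ∈ Ψ, Loewner M N) :=
  ang_iff_hoare_general Θ Ψ hΘe hΨe hΨcv hΨcl hne
end
end

section
/- Define, for CPTN super-operators E, F on L(H_V): E ≤_T^e F iff for all effects M, N (on any extension system), M ⊑ E†(N) implies M ⊑ F†(N) (where G†(N) is extended by tensoring with identity). Then E ≤_T^e F if and only if F − E is completely positive. -/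
open Matrix
open scoped ComplexOrder

noncomputable section

/-!
Positivity of a matrix `X` is detected by `0 ≤ tr (X * N)` for all effects `N`, since every
positive semidefinite matrix is a nonnegative multiple of an effect. The trace dual `E'` of a CPTN
map sends effects to effects, even after tensoring with an identity: `E' ⊗ N ⊑ 1` because `E`
does not increase traces. If `F - E` is completely positive, the extensions of its dual `F' - E'`
are positive, so `E' ⊗ N ⊑ F' ⊗ N` and the refinement follows by transitivity. Conversely,
applying the refinement to the effect `M := E' ⊗ N` gives
`0 ≤ tr (A * (F' ⊗ N - E' ⊗ N)) = tr (((F - E) ⊗ A) * N)` for all `A ⪰ 0` and all effects `N`.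
-/

section PosSemidef

variable {d : Type*} [Fintype d] [DecidableEq d]

lemma posSemidef_of_dotProduct_mulVec_nonneg {X : Matrix d d ℂ}
    (h : ∀ v : d → ℂ, 0 ≤ star v ⬝ᵥ X *ᵥ v) : X.PosSemidef := by
  rw [← isPositive_toEuclideanLin_iff, LinearMap.isPositive_iff_complex]
  intro x
  have hx := h x.ofLp
  have hinner : inner ℂ (X.toEuclideanLin x) x = star x.ofLp ⬝ᵥ X *ᵥ x.ofLp := by
    rw [EuclideanSpace.inner_eq_star_dotProduct, ← (IsSelfAdjoint.of_nonneg hx).star_eq,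
      star_dotProduct, star_star, dotProduct_comm]
    rfl
  rw [hinner]
  exact ⟨Complex.conj_eq_iff_re.mp (IsSelfAdjoint.of_nonneg hx).star_eq,
    (Complex.nonneg_iff.mp hx).1⟩

omit [DecidableEq d] in
lemma trace_mul_vecMulVec_star (X : Matrix d d ℂ) (v : d → ℂ) :
    (X * vecMulVec v (star v)).trace = star v ⬝ᵥ X *ᵥ v := by
  rw [mul_vecMulVec, trace_vecMulVec, dotProduct_comm]

omit [DecidableEq d] in
lemma trace_mul_nonneg_of_posSemidef {A B : Matrix d d ℂ} (hA : A.PosSemidef)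
    (hB : B.PosSemidef) : 0 ≤ (A * B).trace := by
  obtain ⟨k, v, rfl⟩ := posSemidef_iff_eq_sum_vecMulVec.mp hB
  simp only [Matrix.mul_sum, trace_sum, trace_mul_vecMulVec_star]
  exact Finset.sum_nonneg fun i _ => hA.dotProduct_mulVec_nonneg (v i)

lemma posSemidef_of_trace_mul_nonneg {X : Matrix d d ℂ}
    (h : ∀ B : Matrix d d ℂ, B.PosSemidef → 0 ≤ (X * B).trace) : X.PosSemidef :=
  posSemidef_of_dotProduct_mulVec_nonneg fun v =>
    trace_mul_vecMulVec_star X v ▸ h _ (posSemidef_vecMulVec_self_star v)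

open scoped Matrix.Norms.L2Operator MatrixOrder in
lemma Matrix.PosSemidef.exists_eq_smul_isEffect {B : Matrix d d ℂ} (hB : B.PosSemidef) :
    ∃ (t : ℝ) (N : Matrix d d ℂ), 0 ≤ t ∧ IsEffect N ∧ B = (t : ℂ) • N := by
  have hnorm : ((‖B‖ : ℂ) • (1 : Matrix d d ℂ) - B).PosSemidef := by
    simpa [Matrix.le_iff, Algebra.algebraMap_eq_smul_one] using
      IsSelfAdjoint.le_algebraMap_norm_self (a := B) hB.isHermitian
  have ht : (1 + ‖B‖ : ℂ) ≠ 0 := by exact_mod_cast (by positivity : (1 + ‖B‖ : ℝ) ≠ 0)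
  have ht0 : (0 : ℂ) ≤ (1 + ‖B‖ : ℂ)⁻¹ := by exact_mod_cast (by positivity : (0 : ℝ) ≤ (1 + ‖B‖)⁻¹)
  have hsplit : 1 - (1 + ‖B‖ : ℂ)⁻¹ • B = (1 + ‖B‖ : ℂ)⁻¹ • (1 + ((‖B‖ : ℂ) • 1 - B)) := by
    linear_combination (norm := module) -(inv_mul_cancel₀ ht) • (1 : Matrix d d ℂ)
  refine ⟨1 + ‖B‖, (1 + ‖B‖ : ℂ)⁻¹ • B, by positivity, ⟨hB.smul ht0, ?_⟩, ?_⟩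
  · rw [hsplit]
    exact (PosSemidef.one.add hnorm).smul ht0
  · push_cast
    rw [smul_smul, mul_inv_cancel₀ ht, one_smul]

lemma posSemidef_of_trace_mul_isEffect_nonneg {X : Matrix d d ℂ}
    (h : ∀ N : Matrix d d ℂ, IsEffect N → 0 ≤ (X * N).trace) : X.PosSemidef := by
  refine posSemidef_of_trace_mul_nonneg fun B hB => ?_
  obtain ⟨t, N, ht, hN, rfl⟩ := hB.exists_eq_smul_isEffect
  rw [Matrix.mul_smul, trace_smul, smul_eq_mul]
  exact mul_nonneg (Complex.zero_le_real.mpr ht) (h N hN)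

end PosSemidef

lemma Loewner.refl {d : Type*} [Fintype d] (A : Matrix d d ℂ) : Loewner A A := by
  simp only [Loewner, sub_self, PosSemidef.zero]

lemma Loewner.trans {d : Type*} [Fintype d] {A B C : Matrix d d ℂ} (hAB : Loewner A B)
    (hBC : Loewner B C) : Loewner A C := by
  simpa only [Loewner, sub_add_sub_cancel] using hBC.add hAB

def IsTraceDual {n : ℕ} (Φ Φ' : Matrix (Fin n) (Fin n) ℂ → Matrix (Fin n) (Fin n) ℂ) : Prop :=
  ∀ A B : Matrix (Fin n) (Fin n) ℂ, (Φ A * B).trace = (A * Φ' B).trace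

lemma IsTraceDual.sub {n : ℕ} {Φ Φ' Ψ Ψ' : Matrix (Fin n) (Fin n) ℂ → Matrix (Fin n) (Fin n) ℂ}
    (hΦ : IsTraceDual Φ Φ') (hΨ : IsTraceDual Ψ Ψ') : IsTraceDual (Φ - Ψ) (Φ' - Ψ') := by
  intro A B
  simp only [Pi.sub_apply, Matrix.sub_mul, Matrix.mul_sub, trace_sub, hΦ A B, hΨ A B]

section TensorMap

variable {m n : ℕ}

def block (A : Matrix (Fin m × Fin n) (Fin m × Fin n) ℂ) (a b : Fin m) :
    Matrix (Fin n) (Fin n) ℂ :=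
  Matrix.of fun i j => A (a, i) (b, j)

lemma posSemidef_block_self {A : Matrix (Fin m × Fin n) (Fin m × Fin n) ℂ} (hA : A.PosSemidef)
    (a : Fin m) : (block A a a).PosSemidef :=
  hA.submatrix fun i => (a, i)

lemma trace_eq_sum_trace_block (A : Matrix (Fin m × Fin n) (Fin m × Fin n) ℂ) :
    A.trace = ∑ a, (block A a a).trace := by
  simp [trace, block, Fintype.sum_prod_type]

lemma trace_tensorMap (Φ : Matrix (Fin n) (Fin n) ℂ → Matrix (Fin n) (Fin n) ℂ)
    (A : Matrix (Fin m × Fin n) (Fin m × Fin n) ℂ) :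
    (tensorMap Φ m A).trace = ∑ a, (Φ (block A a a)).trace := by
  simp [trace, tensorMap, block, Fintype.sum_prod_type]

lemma trace_tensorMap_mul (Φ : Matrix (Fin n) (Fin n) ℂ → Matrix (Fin n) (Fin n) ℂ)
    (A B : Matrix (Fin m × Fin n) (Fin m × Fin n) ℂ) :
    (tensorMap Φ m A * B).trace = ∑ a, ∑ b, (Φ (block A a b) * block B b a).trace := by
  simp only [trace, diag_apply, Matrix.mul_apply, tensorMap, Fintype.sum_prod_type, block,
    of_apply]
  exact Finset.sum_congr rfl fun a _ => Finset.sum_comm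

lemma tensorMap_sub (Φ Ψ : Matrix (Fin n) (Fin n) ℂ → Matrix (Fin n) (Fin n) ℂ)
    (A : Matrix (Fin m × Fin n) (Fin m × Fin n) ℂ) :
    tensorMap (Φ - Ψ) m A = tensorMap Φ m A - tensorMap Ψ m A :=
  rfl

lemma IsTraceDual.trace_tensorMap_mul {Φ Φ' : Matrix (Fin n) (Fin n) ℂ → Matrix (Fin n) (Fin n) ℂ}
    (hdual : IsTraceDual Φ Φ') (A B : Matrix (Fin m × Fin n) (Fin m × Fin n) ℂ) :
    (tensorMap Φ m A * B).trace = (A * tensorMap Φ' m B).trace := by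
  rw [_root_.trace_tensorMap_mul, trace_mul_comm, _root_.trace_tensorMap_mul, Finset.sum_comm]
  refine Finset.sum_congr rfl fun a _ => Finset.sum_congr rfl fun b _ => ?_
  rw [hdual, trace_mul_comm]

lemma trace_tensorMap_le {Φ : Matrix (Fin n) (Fin n) ℂ → Matrix (Fin n) (Fin n) ℂ}
    (hcp : IsCP Φ) (htni : IsTNI Φ) {A : Matrix (Fin m × Fin n) (Fin m × Fin n) ℂ}
    (hA : A.PosSemidef) : (tensorMap Φ m A).trace ≤ A.trace := by
  have him_eq (X : Matrix (Fin m × Fin n) (Fin m × Fin n) ℂ) (hX : X.PosSemidef) :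
      X.trace.im = 0 :=
    (Complex.nonneg_iff.mp hX.trace_nonneg).2.symm
  refine Complex.le_def.mpr ⟨?_, by rw [him_eq _ (hcp m A hA), him_eq A hA]⟩
  rw [trace_tensorMap, trace_eq_sum_trace_block A, Complex.re_sum, Complex.re_sum]
  exact Finset.sum_le_sum fun a _ => htni _ (posSemidef_block_self hA a)

lemma IsTraceDual.posSemidef_tensorMap
    {Φ Φ' : Matrix (Fin n) (Fin n) ℂ → Matrix (Fin n) (Fin n) ℂ} (hdual : IsTraceDual Φ Φ')
    (hcp : IsCP Φ) {N : Matrix (Fin m × Fin n) (Fin m × Fin n) ℂ} (hN : N.PosSemidef) :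
    (tensorMap Φ' m N).PosSemidef :=
  posSemidef_of_trace_mul_nonneg fun B hB => by
    rw [trace_mul_comm, ← hdual.trace_tensorMap_mul]
    exact trace_mul_nonneg_of_posSemidef (hcp m B hB) hN

lemma IsTraceDual.isEffect_tensorMap
    {Φ Φ' : Matrix (Fin n) (Fin n) ℂ → Matrix (Fin n) (Fin n) ℂ} (hdual : IsTraceDual Φ Φ')
    (hcp : IsCP Φ) (htni : IsTNI Φ) {N : Matrix (Fin m × Fin n) (Fin m × Fin n) ℂ}
    (hN : IsEffect N) : IsEffect (tensorMap Φ' m N) := by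
  refine ⟨hdual.posSemidef_tensorMap hcp hN.1, posSemidef_of_trace_mul_nonneg fun B hB => ?_⟩
  set Y := tensorMap Φ m B
  have hY : Y.PosSemidef := hcp m B hB
  have hsplit : ((1 - tensorMap Φ' m N) * B).trace = (B.trace - Y.trace) + (Y * (1 - N)).trace := by
    rw [Matrix.sub_mul, Matrix.mul_sub, trace_sub, trace_sub, trace_mul_comm (tensorMap Φ' m N),
      ← hdual.trace_tensorMap_mul, Matrix.one_mul, Matrix.mul_one]
    ring
  rw [hsplit]
  exact add_nonneg (sub_nonneg.mpr (trace_tensorMap_le hcp htni hB))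
    (trace_mul_nonneg_of_posSemidef hY hN.2)

end TensorMap

theorem total_refinement_iff_cp_general {n : ℕ}
    (E F E' F' : Matrix (Fin n) (Fin n) ℂ → Matrix (Fin n) (Fin n) ℂ)
    (hE : IsCPTN E)
    (hadjE : ∀ A B : Matrix (Fin n) (Fin n) ℂ, (E A * B).trace = (A * E' B).trace)
    (hadjF : ∀ A B : Matrix (Fin n) (Fin n) ℂ, (F A * B).trace = (A * F' B).trace) :
    (∀ (m : ℕ) (M N : Matrix (Fin m × Fin n) (Fin m × Fin n) ℂ),
        IsEffect M → IsEffect N →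
        Loewner M (tensorMap E' m N) → Loewner M (tensorMap F' m N)) ↔
      IsCP (F - E) := by
  obtain ⟨-, hEcp, hEtni⟩ := hE
  have hdualE : IsTraceDual E E' := hadjE
  have hdualF : IsTraceDual F F' := hadjF
  constructor
  · intro href m A hA
    refine posSemidef_of_trace_mul_isEffect_nonneg fun N hN => ?_
    have hle : Loewner (tensorMap E' m N) (tensorMap F' m N) :=
      href m _ N (hdualE.isEffect_tensorMap hEcp hEtni hN) hN (Loewner.refl _)
    calc 0 ≤ (A * (tensorMap F' m N - tensorMap E' m N)).trace :=
          trace_mul_nonneg_of_posSemidef hA hle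
      _ = (tensorMap (F - E) m A * N).trace := by
          rw [tensorMap_sub, Matrix.mul_sub, Matrix.sub_mul, trace_sub, trace_sub,
            hdualF.trace_tensorMap_mul, hdualE.trace_tensorMap_mul]
  · intro hcp m M N _ hN hMN
    have hle : Loewner (tensorMap E' m N) (tensorMap F' m N) := by
      simpa only [Loewner, ← tensorMap_sub] using
        (hdualF.sub hdualE).posSemidef_tensorMap hcp hN.1
    exact hMN.trans hle

theorem total_refinement_iff_cp {n : ℕ}
    (E F E' F' : Matrix (Fin n) (Fin n) ℂ → Matrix (Fin n) (Fin n) ℂ)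
    (hE : IsCPTN E) (hF : IsCPTN F)
    (hE'l : IsLinearMap ℂ E') (hF'l : IsLinearMap ℂ F')
    (hadjE : ∀ A B : Matrix (Fin n) (Fin n) ℂ, (E A * B).trace = (A * E' B).trace)
    (hadjF : ∀ A B : Matrix (Fin n) (Fin n) ℂ, (F A * B).trace = (A * F' B).trace) :
    (∀ (m : ℕ) (M N : Matrix (Fin m × Fin n) (Fin m × Fin n) ℂ),
        IsEffect M → IsEffect N →
        Loewner M (tensorMap E' m N) → Loewner M (tensorMap F' m N)) ↔
      IsCP (F - E) :=
  total_refinement_iff_cp_general E F E' F' hE hadjE hadjF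
end
end
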